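/- arXiv:1311.1464 — 3 statements merged into one kernel-verified Lean document; each statement's English description precedes it below -/
import Mathlib

section
/- The quasi-shuffle product on the tensor algebra over a commutative (nonunital) Q-algebra A, defined recursively by (a·w) ⋆ (b·v) = a·(w ⋆ (b·v)) + b·((a·w) ⋆ v) + (ab)·(w ⋆ v), is commutative and associative. -/
variable {A : Type*} [NonUnitalCommRing A] [Module ℚ A]
  [SMulCommClass ℚ A A] [IsScalarTower ℚ A A]

/-- The quasi-shuffle product of two words over a commutative nonunital
`ℚ`-algebra `A`, with values in the free `ℚ`-vector space on words. -/
noncomputable def qshW : List A → List A → (List A →₀ ℚ)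
  | [], v => Finsupp.single v 1
  | a :: w, [] => Finsupp.single (a :: w) 1
  | a :: w, b :: v =>
      (qshW w (b :: v)).mapDomain (a :: ·) + (qshW (a :: w) v).mapDomain (b :: ·)
        + (qshW w v).mapDomain ((a * b) :: ·)
termination_by u v => u.length + v.length
decreasing_by
  all_goals simp [List.length_cons]
  all_goals omega

/-- Bilinear extension of the quasi-shuffle product. -/
noncomputable def qshL (x y : List A →₀ ℚ) : List A →₀ ℚ :=
  x.sum fun u c => y.sum fun v d => (c * d) • qshW u v

/-!
Commutativity of `qshW` is immediate from the symmetry of its recursion. Given commutativity,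
associativity `(u ⋆ v) ⋆ w = u ⋆ (v ⋆ w)` amounts to `(u ⋆ v) ⋆ w` being symmetric in `u` and
`w`. Expanding `(au ⋆ bv) ⋆ cw` by the recursion in both factors gives seven smaller instances
of the same shape, one for each nonempty product of `a`, `b`, `c`; by induction on the total
length and commutativity of `A`, this expansion is invariant under swapping `a, u` with `c, w`.
-/

section

omit [Module ℚ A] [SMulCommClass ℚ A A] [IsScalarTower ℚ A A]

lemma qshW_nil_left (v : List A) : qshW [] v = Finsupp.single v 1 := by rw [qshW]

lemma qshW_nil_right (u : List A) : qshW u [] = Finsupp.single u 1 := by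
  cases u <;> rw [qshW]

lemma qshW_cons_cons (a b : A) (u v : List A) :
    qshW (a :: u) (b :: v) =
      (qshW u (b :: v)).mapDomain (a :: ·) + (qshW (a :: u) v).mapDomain (b :: ·)
        + (qshW u v).mapDomain ((a * b) :: ·) := by
  rw [qshW]

theorem qshW_comm : ∀ u v : List A, qshW u v = qshW v u
  | [], v => by rw [qshW_nil_left, qshW_nil_right]
  | a :: u, [] => by rw [qshW_nil_left, qshW_nil_right]
  | a :: u, b :: v => by
      rw [qshW_cons_cons, qshW_cons_cons, qshW_comm u (b :: v), qshW_comm (a :: u) v,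
        qshW_comm u v, mul_comm a b]
      abel
termination_by u v => u.length + v.length

noncomputable def qsh : (List A →₀ ℚ) →ₗ[ℚ] (List A →₀ ℚ) →ₗ[ℚ] (List A →₀ ℚ) :=
  Finsupp.linearCombination ℚ fun u => Finsupp.linearCombination ℚ (qshW u)

lemma qsh_single_single (u v : List A) (c d : ℚ) :
    qsh (Finsupp.single u c) (Finsupp.single v d) = (c * d) • qshW u v := by
  simp [qsh, Finsupp.linearCombination_single, smul_smul]

lemma qshL_eq_qsh (x y : List A →₀ ℚ) : qshL x y = qsh x y := by
  simp only [qshL, qsh, Finsupp.linearCombination_apply, LinearMap.finsupp_sum_apply,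
    LinearMap.smul_apply, Finsupp.smul_sum, smul_smul]

theorem qsh_comm (x y : List A →₀ ℚ) : qsh x y = qsh y x := by
  suffices qsh.flip = (qsh : (List A →₀ ℚ) →ₗ[ℚ] _) from LinearMap.congr_fun₂ this y x
  ext u v
  simp [qsh_single_single, qshW_comm]

lemma qsh_single_nil (x : List A →₀ ℚ) : qsh x (Finsupp.single [] 1) = x := by
  suffices qsh.flip (Finsupp.single [] 1) = (LinearMap.id : (List A →₀ ℚ) →ₗ[ℚ] _) from
    LinearMap.congr_fun this x
  ext u
  simp [qsh_single_single, qshW_nil_right]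

lemma qsh_mapDomain_cons (a b : A) (x y : List A →₀ ℚ) :
    qsh (x.mapDomain (a :: ·)) (y.mapDomain (b :: ·)) =
      (qsh x (y.mapDomain (b :: ·))).mapDomain (a :: ·)
        + (qsh (x.mapDomain (a :: ·)) y).mapDomain (b :: ·)
        + (qsh x y).mapDomain ((a * b) :: ·) := by
  induction x using Finsupp.induction_linear with
  | zero => simp
  | add x x' hx hx' =>
    simp only [Finsupp.mapDomain_add, map_add, LinearMap.add_apply, hx, hx']
    abel
  | single u c =>
  induction y using Finsupp.induction_linear with
  | zero => simp
  | add y y' hy hy' =>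
    simp only [Finsupp.mapDomain_add, map_add, hy, hy']
    abel
  | single v d =>
    simp only [Finsupp.mapDomain_single, qsh_single_single, qshW_cons_cons, smul_add,
      Finsupp.mapDomain_smul]

lemma qsh_qshW_cons_single_cons (a b c : A) (u v w : List A) :
    qsh (qshW (a :: u) (b :: v)) (Finsupp.single (c :: w) 1) =
      (qsh (qshW u (b :: v)) (Finsupp.single (c :: w) 1)).mapDomain (a :: ·)
      + (qsh (qshW (a :: u) v) (Finsupp.single (c :: w) 1)).mapDomain (b :: ·)
      + (qsh (qshW u v) (Finsupp.single (c :: w) 1)).mapDomain ((a * b) :: ·)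
      + (qsh (qshW (a :: u) (b :: v)) (Finsupp.single w 1)).mapDomain (c :: ·)
      + (qsh (qshW u (b :: v)) (Finsupp.single w 1)).mapDomain ((a * c) :: ·)
      + (qsh (qshW (a :: u) v) (Finsupp.single w 1)).mapDomain ((b * c) :: ·)
      + (qsh (qshW u v) (Finsupp.single w 1)).mapDomain ((a * b * c) :: ·) := by
  have hw : Finsupp.single (c :: w) (1 : ℚ) = (Finsupp.single w 1).mapDomain (c :: ·) :=
    Finsupp.mapDomain_single.symm
  rw [hw, qshW_cons_cons a b u v]
  simp only [map_add, LinearMap.add_apply, Finsupp.mapDomain_add, qsh_mapDomain_cons]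
  abel

theorem qsh_qshW_single_symm : ∀ u v w : List A,
    qsh (qshW u v) (Finsupp.single w 1) = qsh (qshW w v) (Finsupp.single u 1)
  | [], v, w => by
    rw [qshW_nil_left, qsh_single_single, qsh_single_nil, one_mul, one_smul, qshW_comm]
  | u, [], w => by
    rw [qshW_nil_right, qshW_nil_right, qsh_single_single, qsh_single_single, qshW_comm]
  | u, v, [] => by
    rw [qshW_nil_left, qsh_single_single, qsh_single_nil, one_mul, one_smul, qshW_comm]
  | a :: u, b :: v, c :: w => by
    rw [qsh_qshW_cons_single_cons, qsh_qshW_cons_single_cons,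
      qsh_qshW_single_symm u (b :: v) (c :: w), qsh_qshW_single_symm (a :: u) v (c :: w),
      qsh_qshW_single_symm u v (c :: w), qsh_qshW_single_symm (a :: u) (b :: v) w,
      qsh_qshW_single_symm u (b :: v) w, qsh_qshW_single_symm (a :: u) v w,
      qsh_qshW_single_symm u v w]
    simp only [mul_comm, mul_left_comm]
    abel
termination_by u v w => u.length + v.length + w.length

theorem qsh_qsh_symm (x y z : List A →₀ ℚ) : qsh (qsh x y) z = qsh (qsh z y) x := by
  induction x using Finsupp.induction_linear with
  | zero => simp
  | add x x' hx hx' => simp only [map_add, LinearMap.add_apply, hx, hx']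
  | single u c =>
  induction y using Finsupp.induction_linear with
  | zero => simp
  | add y y' hy hy' => simp only [map_add, LinearMap.add_apply, hy, hy']
  | single v d =>
  induction z using Finsupp.induction_linear with
  | zero => simp
  | add z z' hz hz' => simp only [map_add, LinearMap.add_apply, hz, hz']
  | single w e =>
    rw [← Finsupp.smul_single_one u c, ← Finsupp.smul_single_one v d,
      ← Finsupp.smul_single_one w e]
    simp only [map_smul, LinearMap.smul_apply, qsh_single_single, one_mul, one_smul,
      qsh_qshW_single_symm u v w, smul_smul]
    ring_nf

theorem qsh_assoc (x y z : List A →₀ ℚ) : qsh (qsh x y) z = qsh x (qsh y z) := by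
  rw [qsh_qsh_symm, qsh_comm, qsh_comm z]

end

/-- The quasi-shuffle product is commutative and associative, with the empty
word as unit. -/
theorem quasiShuffle_comm_assoc :
    (∀ x : List A →₀ ℚ, qshL (Finsupp.single ([] : List A) 1) x = x ∧
      qshL x (Finsupp.single ([] : List A) 1) = x) ∧
    (∀ x y : List A →₀ ℚ, qshL x y = qshL y x) ∧
    (∀ x y z : List A →₀ ℚ, qshL (qshL x y) z = qshL x (qshL y z)) := by
  simp only [qshL_eq_qsh]
  refine ⟨fun x => ⟨?_, qsh_single_nil x⟩, qsh_comm, qsh_assoc⟩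
  rw [qsh_comm, qsh_single_nil]
end

section
/- For a formal power series P(X) = Σ_{i≥1} p_i X^i ∈ X·Q[[X]] and a commutative Q-algebra A, define φ_P : T(A) → T(A) by φ_P(a₁...aₙ) = Σ_{k=1}^n Σ_{i₁+...+i_k = n} p_{i₁}···p_{i_k} (a₁···a_{i₁}) ⊗ ... ⊗ (a_{i₁+...+i_{k-1}+1}···aₙ), where products inside parentheses are taken in A. Then φ_P is a coalgebra morphism for the deconcatenation coproduct: Δ∘φ_P = (φ_P⊗φ_P)∘Δ. -/
/-! Deconcatenating a word `b :: u` either cuts before `b`, giving `1 ⊗ (b :: u)`, or cuts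
after `b`, giving a cut of `u` with `b` prepended to its left factor. Since `φ_P (a :: w)`
splits off a first block `a w₁ ⋯ wᵢ` and prepends its product to `φ_P (w.drop i)`, strong
induction on the length gives `Δ (φ_P w) = Σ_k φ_P (w.take k) ⊗ φ_P (w.drop k)`: a cut of the
rest at `j` is the cut of `w` at `k = i + j`, and on the right-hand side the first block of
`φ_P (a :: w.take k)` ranges over `i ≤ k`. The identity on words is `(φ_P ⊗ φ_P) (Δ w)`, and all
maps involved are linear. -/

variable {A : Type*} [NonUnitalCommRing A] [Module ℚ A]
  [SMulCommClass ℚ A A] [IsScalarTower ℚ A A]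

/-- `φ_P` on a basis word: `φ_P(a₁...aₙ) = Σ_k Σ_{i₁+...+i_k=n} p_{i₁}···p_{i_k}
(a₁···a_{i₁}) ⊗ ... ⊗ (a_{i₁+...+i_{k-1}+1}···aₙ)`, defined recursively over the
first block; `(w.take i).foldl (·*·) a` is the internal product in `A` of the
first block `a :: w.take i` of size `i+1`. -/
noncomputable def phiW (p : ℕ → ℚ) : List A → (List A →₀ ℚ)
  | [] => Finsupp.single [] 1
  | a :: w => ∑ i ∈ Finset.range (w.length + 1),
      p (i + 1) • (phiW p (w.drop i)).mapDomain
        (List.cons ((w.take i).foldl (· * ·) a))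
termination_by l => l.length
decreasing_by simp [List.length_cons] <;> omega

/-- Linear extension of `φ_P` to `T(A)`. -/
noncomputable def phi (p : ℕ → ℚ) (x : List A →₀ ℚ) : List A →₀ ℚ :=
  x.sum fun w c => c • phiW p w

/-- Deconcatenation coproduct. -/
noncomputable def delta (x : List A →₀ ℚ) : (List A × List A) →₀ ℚ :=
  x.sum fun w c => c • ∑ k ∈ Finset.range (w.length + 1),
    Finsupp.single (w.take k, w.drop k) (1 : ℚ)

/-- Tensor product of two elements of `T(A)` in the model of `T(A) ⊗ T(A)`. -/
noncomputable def tensorF (x y : List A →₀ ℚ) : (List A × List A) →₀ ℚ :=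
  x.sum fun u c => y.sum fun v d => Finsupp.single (u, v) (c * d)

/-- `φ_P ⊗ φ_P` on `T(A) ⊗ T(A)`. -/
noncomputable def phi2 (p : ℕ → ℚ) (x : (List A × List A) →₀ ℚ) :
    (List A × List A) →₀ ℚ :=
  x.sum fun q c => c • tensorF (phiW p q.1) (phiW p q.2)

open Finsupp Finset TensorProduct

section Deconcatenation

variable {α β γ R : Type*} [CommSemiring R]

noncomputable def deconcat (w : List α) : List α × List α →₀ R :=
  ∑ k ∈ range (w.length + 1), single (w.take k, w.drop k) 1

theorem deconcat_cons (b : α) (w : List α) :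
    (deconcat (b :: w) : List α × List α →₀ R) =
      single ([], b :: w) 1 + mapDomain (Prod.map (List.cons b) id) (deconcat w) := by
  rw [deconcat, deconcat, List.length_cons, sum_range_succ', mapDomain_finsetSum, add_comm]
  simp [mapDomain_single]

theorem finsuppTensorFinsupp'_mapDomain_tmul (h : α → γ) (f : α →₀ R) (g : β →₀ R) :
    finsuppTensorFinsupp' R γ β (mapDomain h f ⊗ₜ g) =
      mapDomain (Prod.map h id) (finsuppTensorFinsupp' R α β (f ⊗ₜ g)) := by
  induction f using Finsupp.induction_linear with
  | zero => simp
  | add f f' hf hf' => simp only [mapDomain_add, add_tmul, map_add, hf, hf']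
  | single a c =>
    induction g using Finsupp.induction_linear with
    | zero => simp
    | add g g' hg hg' => simp only [tmul_add, map_add, mapDomain_add, hg, hg']
    | single b d =>
      simp only [mapDomain_single, finsuppTensorFinsupp'_single_tmul_single, Prod.map_apply, id]

theorem linearCombination_deconcat_mapDomain_cons (b : α) (f : List α →₀ R) :
    linearCombination R deconcat (mapDomain (List.cons b) f) =
      finsuppTensorFinsupp' R _ _ (single [] 1 ⊗ₜ mapDomain (List.cons b) f) +
        mapDomain (Prod.map (List.cons b) id) (linearCombination R deconcat f) := by
  induction f using Finsupp.induction_linear with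
  | zero => simp
  | add f f' hf hf' => simp only [mapDomain_add, tmul_add, map_add, hf, hf']; abel
  | single u c => simp [mapDomain_single, deconcat_cons, mapDomain_smul]

end Deconcatenation

theorem delta_eq_linearCombination {α : Type*} (x : List α →₀ ℚ) :
    delta x = linearCombination ℚ deconcat x := rfl

theorem tensorF_eq_finsuppTensorFinsupp' {α : Type*} (x y : List α →₀ ℚ) :
    tensorF x y = finsuppTensorFinsupp' ℚ _ _ (x ⊗ₜ y) := by
  conv_rhs => rw [← sum_single x, ← sum_single y]
  simp only [tensorF, Finsupp.sum, sum_tmul, tmul_sum, map_sum,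
    finsuppTensorFinsupp'_single_tmul_single]
  exact sum_comm

section PhiW

variable {S : Type*} [NonUnitalCommRing S] (p : ℕ → ℚ)

theorem phi_eq_linearCombination (x : List S →₀ ℚ) :
    phi p x = linearCombination ℚ (phiW p) x := rfl

theorem phi2_eq_linearCombination (x : List S × List S →₀ ℚ) :
    phi2 p x = linearCombination ℚ (fun q => tensorF (phiW p q.1) (phiW p q.2)) x := rfl

theorem phiW_nil : phiW p ([] : List S) = single [] 1 := by
  rw [phiW]

theorem phiW_cons (a : S) (w : List S) :
    phiW p (a :: w) = ∑ i ∈ range (w.length + 1),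
      p (i + 1) • mapDomain (List.cons ((w.take i).foldl (· * ·) a)) (phiW p (w.drop i)) := by
  rw [phiW]

theorem phiW_cons_take (a : S) (w : List S) {k : ℕ} (hk : k ≤ w.length) :
    phiW p (a :: w.take k) = ∑ i ∈ range (k + 1),
      p (i + 1) • mapDomain (List.cons ((w.take i).foldl (· * ·) a))
        (phiW p ((w.drop i).take (k - i))) := by
  rw [phiW_cons, List.length_take_of_le hk]
  refine sum_congr rfl fun i hi => ?_
  have hik : i ≤ k := Nat.lt_succ_iff.mp (mem_range.mp hi)
  rw [List.take_take, min_eq_left hik, List.drop_take]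

theorem tensorF_phiW_cons_take (a : S) (w : List S) {k : ℕ} (hk : k ≤ w.length) :
    tensorF (phiW p (a :: w.take k)) (phiW p (w.drop k)) = ∑ i ∈ range (k + 1),
      p (i + 1) • tensorF (mapDomain (List.cons ((w.take i).foldl (· * ·) a))
        (phiW p ((w.drop i).take (k - i)))) (phiW p (w.drop k)) := by
  simp only [phiW_cons_take p a w hk, tensorF_eq_finsuppTensorFinsupp', sum_tmul, map_sum,
    ← smul_tmul', map_smul]

theorem delta_phiW : ∀ w : List S,
    delta (phiW p w) =
      ∑ k ∈ range (w.length + 1), tensorF (phiW p (w.take k)) (phiW p (w.drop k))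
  | [] => by
    simp [phiW_nil, delta_eq_linearCombination, deconcat, tensorF_eq_finsuppTensorFinsupp']
  | a :: w => by
    set b : ℕ → S := fun i => (w.take i).foldl (· * ·) a
    -- first block `a w₁ ⋯ wᵢ`, then a cut `j` letters later
    set F : ℕ → ℕ → List S × List S →₀ ℚ := fun i j =>
      p (i + 1) • tensorF (mapDomain (List.cons (b i)) (phiW p ((w.drop i).take j)))
        (phiW p (w.drop (i + j)))
    have summand : ∀ i ∈ range (w.length + 1),
        delta (p (i + 1) • mapDomain (List.cons (b i)) (phiW p (w.drop i))) =
          p (i + 1) • tensorF (single [] 1) (mapDomain (List.cons (b i)) (phiW p (w.drop i))) +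
            ∑ j ∈ range (w.length + 1 - i), F i j := by
      intro i hi
      rw [delta_eq_linearCombination, map_smul, linearCombination_deconcat_mapDomain_cons,
        ← delta_eq_linearCombination, delta_phiW (w.drop i), mapDomain_finsetSum, smul_add,
        Finset.smul_sum, List.length_drop, Nat.sub_add_comm (Nat.lt_succ_iff.mp (mem_range.mp hi))]
      simp only [F, tensorF_eq_finsuppTensorFinsupp', finsuppTensorFinsupp'_mapDomain_tmul,
        List.drop_drop]
    have lhs_first : ∑ i ∈ range (w.length + 1),
        p (i + 1) • tensorF (single [] 1) (mapDomain (List.cons (b i)) (phiW p (w.drop i))) =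
          tensorF (single [] 1) (phiW p (a :: w)) := by
      simp only [phiW_cons, tensorF_eq_finsuppTensorFinsupp', tmul_sum, tmul_smul, map_sum,
        map_smul, b]
    have rhs_summand : ∀ k ∈ range (w.length + 1),
        tensorF (phiW p (a :: w.take k)) (phiW p (w.drop k)) =
          ∑ i ∈ range (k + 1), F i (k - i) := by
      intro k hk
      rw [tensorF_phiW_cons_take p a w (Nat.lt_succ_iff.mp (mem_range.mp hk))]
      refine sum_congr rfl fun i hi => ?_
      simp only [F, b, Nat.add_sub_cancel' (Nat.lt_succ_iff.mp (mem_range.mp hi))]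
    calc delta (phiW p (a :: w))
        = tensorF (single [] 1) (phiW p (a :: w)) +
            ∑ i ∈ range (w.length + 1), ∑ j ∈ range (w.length + 1 - i), F i j := by
          conv_lhs => rw [phiW_cons, delta_eq_linearCombination, map_sum]
          simp only [← delta_eq_linearCombination]
          rw [sum_congr rfl summand, sum_add_distrib, lhs_first]
      _ = tensorF (single [] 1) (phiW p (a :: w)) +
            ∑ k ∈ range (w.length + 1), tensorF (phiW p (a :: w.take k)) (phiW p (w.drop k)) := by
          rw [← sum_range_diag_flip, sum_congr rfl rhs_summand]
      _ = _ := by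
          rw [List.length_cons, sum_range_succ' _ (w.length + 1)]
          simp only [List.take_succ_cons, List.drop_succ_cons, List.take_zero, List.drop_zero,
            phiW_nil, add_comm]
termination_by w => w.length
decreasing_by simp only [List.length_drop, List.length_cons]; omega

end PhiW

/-- `φ_P` is a morphism of coalgebras for the deconcatenation coproduct:
`Δ ∘ φ_P = (φ_P ⊗ φ_P) ∘ Δ`. -/
theorem phi_coalgebra_morphism (p : ℕ → ℚ) (x : List A →₀ ℚ) :
    delta (phi p x) = phi2 p (delta x) := by
  rw [phi_eq_linearCombination, delta_eq_linearCombination, delta_eq_linearCombination,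
    phi2_eq_linearCombination, apply_linearCombination, apply_linearCombination]
  congr 2 with w
  rw [Function.comp_apply, ← delta_eq_linearCombination, delta_phiW, Function.comp_apply,
    deconcat, map_sum]
  simp only [linearCombination_single, one_smul]
end

section
/- For formal power series U ∈ X + X²·Q[[X]] (or with invertible linear coefficient) and V ∈ X·Q[[X]], the conjugation identity of coderivations holds at the level of power series: the series corresponding to φ_U⁻¹ ∘ D_V ∘ φ_U is (V∘U)/U′, i.e., Σ_{k≥p} (k−p+1) w_{k−p+1} U^k = U^p / U′ when V = X^p and W is the compositional inverse of U. -/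
/-!
The left-hand factor is the substitution of `X ^ p * W'` into `U`, that is `U ^ p * (W' ∘ U)`,
and differentiating `W ∘ U = X` by the chain rule gives `(W' ∘ U) * U' = 1`.
-/

open PowerSeries

/-- Substitution of formal power series. -/
noncomputable def comp (P Q : PowerSeries ℚ) : PowerSeries ℚ :=
  PowerSeries.mk fun n => ∑ i ∈ Finset.range (n + 1),
    PowerSeries.coeff (R := ℚ) i P * PowerSeries.coeff (R := ℚ) n (Q ^ i)

namespace PowerSeries

theorem coeff_pow_eq_zero_of_lt {R : Type*} [CommSemiring R] {U : R⟦X⟧}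
    (hU : constantCoeff U = 0) {n k : ℕ} (h : n < k) : coeff n (U ^ k) = 0 :=
  X_pow_dvd_iff.mp (pow_dvd_pow_of_dvd (X_dvd_iff.mpr hU) k) n h

variable {R : Type*} [CommRing R] {U : R⟦X⟧}

theorem coeff_subst_eq_sum_range (hU : constantCoeff U = 0) (f : R⟦X⟧) (n : ℕ) :
    coeff n (f.subst U) = ∑ k ∈ Finset.range (n + 1), coeff k f * coeff n (U ^ k) := by
  rw [coeff_subst' (.of_constantCoeff_zero' hU)]
  refine finsum_eq_sum_of_support_subset _ fun k hk => ?_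
  by_contra hkn
  simp only [Finset.coe_range, Set.mem_Iio, not_lt] at hkn
  exact hk (by simp only [coeff_pow_eq_zero_of_lt hU (Nat.lt_of_succ_le hkn), smul_zero])

theorem mk_sum_mul_coeff_pow_eq_subst (hU : constantCoeff U = 0) (c : ℕ → R) :
    (mk fun n => ∑ k ∈ Finset.range (n + 1), c k * coeff n (U ^ k)) = (mk c).subst U := by
  ext n
  simp only [coeff_mk, coeff_subst_eq_sum_range hU]

theorem mk_eq_X_pow_mul_derivative (W : R⟦X⟧) (p : ℕ) :
    (mk fun k => if p ≤ k then ((k - p + 1 : ℕ) : R) * coeff (k - p + 1) W else 0) =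
      X ^ p * d⁄dX R W := by
  ext k
  rw [coeff_mk, coeff_X_pow_mul', coeff_derivative]
  split_ifs <;> push_cast <;> ring

end PowerSeries

theorem comp_eq_subst {U : ℚ⟦X⟧} (hU : constantCoeff U = 0) (P : ℚ⟦X⟧) :
    comp P U = P.subst U := by
  ext n
  rw [comp, coeff_mk, coeff_subst_eq_sum_range hU]

theorem coderivation_conjugation_general (U W : PowerSeries ℚ) (p : ℕ)
    (hU0 : constantCoeff (R := ℚ) U = 0)
    (hWU : comp W U = PowerSeries.X) :
    U.derivativeFun *
      (PowerSeries.mk fun n => ∑ k ∈ Finset.range (n + 1),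
        (if p ≤ k then ((k - p + 1 : ℕ) : ℚ) * PowerSeries.coeff (R := ℚ) (k - p + 1) W
          else 0) * PowerSeries.coeff (R := ℚ) n (U ^ k)) = U ^ p := by
  have hU : HasSubst U := .of_constantCoeff_zero' hU0
  have chain_rule : (d⁄dX ℚ W).subst U * d⁄dX ℚ U = 1 := by
    rw [← derivative_subst hU, ← comp_eq_subst hU0, hWU, derivative_X]
  rw [mk_sum_mul_coeff_pow_eq_subst hU0, mk_eq_X_pow_mul_derivative, subst_mul hU, subst_pow hU,
    subst_X hU]
  calc d⁄dX ℚ U * (U ^ p * (d⁄dX ℚ W).subst U)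
      = U ^ p * ((d⁄dX ℚ W).subst U * d⁄dX ℚ U) := by ring
    _ = U ^ p := by rw [chain_rule, mul_one]

/-- The conjugation identity for coderivations at the level of power series:
if `W` is the compositional inverse of a tangent-to-identity `U`, then
`Σ_{k≥p} (k−p+1) w_{k−p+1} U^k = U^p / U′`, i.e. the left-hand side multiplied
by `U′` equals `U^p`.  (The sum is well defined since `coeff n (U^k) = 0` for
`k > n`, so each coefficient is a finite sum.) -/
theorem coderivation_conjugation (U W : PowerSeries ℚ) (p : ℕ) (hp : 1 ≤ p)
    (hU0 : constantCoeff (R := ℚ) U = 0) (hU1 : PowerSeries.coeff (R := ℚ) 1 U = 1)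
    (hW0 : constantCoeff (R := ℚ) W = 0) (hWU : comp W U = PowerSeries.X) :
    U.derivativeFun *
      (PowerSeries.mk fun n => ∑ k ∈ Finset.range (n + 1),
        (if p ≤ k then ((k - p + 1 : ℕ) : ℚ) * PowerSeries.coeff (R := ℚ) (k - p + 1) W
          else 0) * PowerSeries.coeff (R := ℚ) n (U ^ k)) = U ^ p :=
  coderivation_conjugation_general U W p hU0 hWU
end
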